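/- Let W ∈ ℝP¹ and let A ∈ GL₂(ℝ) have distinct singular values, so that L(A) is well defined. Then ‖A‖·|sin∠(L(A), W^⊥)| ≤ ‖π_W ∘ A‖_op ≤ ‖A‖, where ∠(V,U) denotes the angle between the lines V and U. -/

import Mathlib

open MeasureTheory Filter Metric Set
open scoped ENNReal NNReal Topology RealInnerProductSpace Classical

noncomputable section

abbrev E2 := EuclideanSpace ℝ (Fin 2)
abbrev Mat2 := Matrix (Fin 2) (Fin 2) ℝ
abbrev Aff2 := Mat2 × E2

instance : MeasurableSpace Mat2 := inferInstanceAs (MeasurableSpace (Fin 2 → Fin 2 → ℝ))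

/-- A matrix viewed as a continuous linear map on euclidean `ℝ²`. -/
def matCLM (A : Mat2) : E2 →L[ℝ] E2 := Matrix.toEuclideanCLM (𝕜 := ℝ) A

/-- An affine map of `ℝ²`, represented as a pair (linear part, translation part). -/
def affApply (f : Aff2) (x : E2) : E2 := matCLM f.1 x + f.2

/-- Composition of affine maps. -/
def affComp (f g : Aff2) : Aff2 := (f.1 * g.1, affApply f g.2)

/-- The identity affine map. -/
def affId : Aff2 := (1, 0)

/-- The inverse of an (invertible) affine map. -/
def affInv (g : Aff2) : Aff2 := (g.1⁻¹, -(matCLM (g.1⁻¹) g.2))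

/-- The euclidean norm on affine maps of `ℝ²`, identified with `ℝ⁶`. -/
def affNorm (f : Aff2) : ℝ := Real.sqrt ((∑ i, ∑ j, (f.1 i j) ^ 2) + ∑ i, (f.2 i) ^ 2)

/-- A contracting map. -/
def IsContractingAff (f : Aff2) : Prop := ∃ r : ℝ≥0, r < 1 ∧ LipschitzWith r (affApply f)

/-- Composition `φ_{i₁} ∘ ⋯ ∘ φ_{iₙ}` along a word. -/
def wordAff {Λ : Type*} (φ : Λ → Aff2) {n : ℕ} (w : Fin n → Λ) : Aff2 :=
  (List.ofFn fun k => φ (w k)).foldr affComp affId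

/-- Product `A_{i₁} ⋯ A_{iₙ}` along a word. -/
def wordMat {Λ : Type*} (A : Λ → Mat2) {n : ℕ} (w : Fin n → Λ) : Mat2 :=
  (List.ofFn fun k => A (w k)).prod

/-- Composition along a word given as a list. -/
def listAff {Λ : Type*} (φ : Λ → Aff2) (l : List Λ) : Aff2 := (l.map φ).foldr affComp affId

/-- Matrix product along a word given as a list. -/
def listMat {Λ : Type*} (A : Λ → Mat2) (l : List Λ) : Mat2 := (l.map A).prod

/-- Exponential separation of the system `φ`. -/
def ExpSeparated {Λ : Type*} (φ : Λ → Aff2) : Prop :=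
  ∃ c : ℝ, 0 < c ∧ ∀ (n : ℕ) (w₁ w₂ : Fin n → Λ), w₁ ≠ w₂ →
    affNorm (wordAff φ w₁ - wordAff φ w₂) > c ^ n

/-- Total irreducibility: no finite nonempty set of lines is invariant under all the `A i`. -/
def TotallyIrreducible {Λ : Type*} (A : Λ → Mat2) : Prop :=
  ¬ ∃ S : Finset (Submodule ℝ E2), S.Nonempty ∧ (∀ W ∈ S, Module.finrank ℝ W = 1) ∧
      ∀ i, ∀ W ∈ S, Submodule.map (Matrix.toEuclideanLin (A i)) W ∈ S

/-- Non-conformality: in no coordinate system are all the `A i` scalar multiples of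
orthogonal matrices. -/
def NonConformal {Λ : Type*} (A : Λ → Mat2) : Prop :=
  ¬ ∃ B : Mat2, IsUnit B ∧ ∀ i, ∃ (c : ℝ) (O : Mat2), Matrix.transpose O * O = 1 ∧ B * A i * B⁻¹ = c • O

/-- The maps `φ i` have no common fixed point. -/
def NoCommonFixedPoint {Λ : Type*} (φ : Λ → Aff2) : Prop :=
  ¬ ∃ x : E2, ∀ i, affApply (φ i) x = x

/-- `μ` is the self-affine measure of the system `(φ, p)`: it is compactly supported and
satisfies `μ = ∑ pᵢ (φᵢ)μ`. -/
def IsSelfAffine {Λ : Type*} [Fintype Λ] (φ : Λ → Aff2) (p : Λ → ℝ) (μ : Measure E2) : Prop :=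
  (∃ K : Set E2, IsCompact K ∧ μ K = 1) ∧
    μ = ∑ i, ENNReal.ofReal (p i) • Measure.map (affApply (φ i)) μ

/-- Exact dimensionality of a measure. -/
def IsExactDim {X : Type*} [MeasurableSpace X] [PseudoMetricSpace X] (ν : Measure X) (s : ℝ) :
    Prop :=
  ∀ᵐ x ∂ν, Tendsto (fun r : ℝ => Real.log (ν (closedBall x r)).toReal / Real.log r)
    (nhdsWithin 0 (Set.Ioi 0)) (nhds s)

/-- Largest singular value `α₁(A) = ‖A‖`. -/
def alpha1 (A : Mat2) : ℝ := ‖matCLM A‖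

/-- Smallest singular value `α₂(A) = ‖A⁻¹‖⁻¹` (for invertible `A`). -/
def alpha2 (A : Mat2) : ℝ := ‖matCLM (A⁻¹)‖⁻¹

/-- `A` has distinct singular values. -/
def HasDistinctSV (A : Mat2) : Prop := alpha2 A < alpha1 A

/-- Orthogonal projection onto a subspace `W ≤ ℝ²`, as a map `ℝ² → ℝ²`. -/
def projMap (W : Submodule ℝ E2) : E2 →L[ℝ] E2 := W.subtypeL.comp (Submodule.orthogonalProjection W)

/-- The metric on `ℝP¹` (lines through the origin): `d(V,W) = ‖π_V − π_W‖`. -/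
def dRP1 (V W : Submodule ℝ E2) : ℝ := ‖projMap V - projMap W‖

/-- `W` is the direction of the major axis of the ellipse `A(unit ball)`. -/
def IsMajorDir (A : Mat2) (W : Submodule ℝ E2) : Prop :=
  ∃ v : E2, ‖v‖ = 1 ∧ ‖matCLM A v‖ = alpha1 A ∧ W = Submodule.span ℝ {matCLM A v}

/-- The major axis direction `L(A)` (an arbitrary choice among the major directions;
it is unique when the singular values of `A` are distinct). -/
def majorDir (A : Mat2) : Submodule ℝ E2 :=
  if h : ∃ W, IsMajorDir A W then h.choose else ⊥

/-- `-t·log₂ t`. -/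
def h2 (t : ℝ) : ℝ := -(t * Real.logb 2 t)

/-- Level-`n` dyadic interval. -/
def dyI (n : ℕ) (k : ℤ) : Set ℝ := Set.Ico ((k : ℝ) / 2 ^ n) (((k : ℝ) + 1) / 2 ^ n)

/-- Shannon entropy (base 2) of a measure on `ℝ` w.r.t. the level-`n` dyadic partition. -/
def Hdy1 (ν : Measure ℝ) (n : ℕ) : ℝ := ∑' k : ℤ, h2 (ν (dyI n k)).toReal

/-- Level-`n` dyadic square in `ℝ²`. -/
def dyC (n : ℕ) (k : ℤ × ℤ) : Set E2 := {x : E2 | x 0 ∈ dyI n k.1 ∧ x 1 ∈ dyI n k.2}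

/-- Shannon entropy (base 2) of a measure on `ℝ²` w.r.t. the level-`n` dyadic partition. -/
def Hdy2 (ν : Measure E2) (n : ℕ) : ℝ := ∑' k : ℤ × ℤ, h2 (ν (dyC n k)).toReal

/-- Level-`n` dyadic cell in the space of affine maps (identified with `ℝ⁶`). -/
def dyA (n : ℕ) (k : (Fin 2 → Fin 2 → ℤ) × (Fin 2 → ℤ)) : Set Aff2 :=
  {f : Aff2 | (∀ i j, f.1 i j ∈ dyI n (k.1 i j)) ∧ ∀ i, f.2 i ∈ dyI n (k.2 i)}

/-- Shannon entropy (base 2) of a measure on affine maps w.r.t. the level-`n` dyadic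
partition of `ℝ⁶`. -/
def HdyA (θ : Measure Aff2) (n : ℕ) : ℝ :=
  ∑' k : (Fin 2 → Fin 2 → ℤ) × (Fin 2 → ℤ), h2 (θ (dyA n k)).toReal

/-- The convolution `θ.ν`: push-forward of `θ × ν` under the action `(φ,x) ↦ φ(x)`. -/
def actConv (θ : Measure Aff2) (ν : Measure E2) : Measure E2 :=
  Measure.map (fun q : Aff2 × E2 => affApply q.1 q.2) (θ.prod ν)

/-- The measure `θ.x`: push-forward of `θ` under `φ ↦ φ(x)`. -/
def affPush (θ : Measure Aff2) (x : E2) : Measure E2 :=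
  Measure.map (fun f : Aff2 => affApply f x) θ

/-- `ν` is `(W,δ)`-concentrated: `1−δ` of its mass lies within distance `δ` of a
translate of `W`. -/
def Concentrated (ν : Measure E2) (W : Submodule ℝ E2) (δ : ℝ) : Prop :=
  ∃ b : E2, 1 - δ ≤ (ν (Metric.cthickening δ ((fun w => b + w) '' (W : Set E2)))).toReal

/-- Shannon entropy `H(p)` of a probability vector. -/
def entropyVec {Λ : Type*} [Fintype Λ] (p : Λ → ℝ) : ℝ := -∑ i, p i * Real.logb 2 (p i)

/-- The Lyapunov dimension determined by the entropy `Hp` and Lyapunov exponents `χ₁ ≥ χ₂`. -/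
def lyapDim (Hp χ₁ χ₂ : ℝ) : ℝ :=
  if Hp ≤ |χ₁| then Hp / |χ₁|
  else if Hp ≤ |χ₁| + |χ₂| then 1 + (Hp - |χ₁|) / |χ₂|
  else 2 * Hp / (|χ₁| + |χ₂|)

/-- The point of `ℝ²` with coordinates `(a, b)`. -/
def mkE2 (a b : ℝ) : E2 := (EuclideanSpace.equiv (Fin 2) ℝ).symm ![a, b]


/-- **Lemma 2.1.** For `W ∈ ℝP¹` and `A ∈ GL₂(ℝ)` with distinct singular values (so that
`L(A)` is defined): `‖A‖·|sin∠(L(A), W^⊥)| ≤ ‖π_W ∘ A‖ ≤ ‖A‖`. Here `|sin∠(L(A), W^⊥)|`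
equals `‖π_W v‖` for the unit vector `v = A u / ‖A u‖` spanning `L(A)`. -/
theorem stmt7 (A : Mat2) (hA : IsUnit A) (hsv : HasDistinctSV A)
    (W : Submodule ℝ E2) (hW : Module.finrank ℝ W = 1)
    (u : E2) (hu : ‖u‖ = 1) (hmax : ‖matCLM A u‖ = alpha1 A) :
    alpha1 A * ‖projMap W ((‖matCLM A u‖)⁻¹ • matCLM A u)‖ ≤ ‖(projMap W).comp (matCLM A)‖ ∧
      ‖(projMap W).comp (matCLM A)‖ ≤ alpha1 A := by
  have hproj : ‖projMap W‖ ≤ 1 := by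
    apply ContinuousLinearMap.opNorm_le_bound _ zero_le_one
    intro x
    rw [one_mul]
    calc ‖projMap W x‖ = ‖Submodule.orthogonalProjection W x‖ := rfl
      _ ≤ ‖Submodule.orthogonalProjection W‖ * ‖x‖ := (Submodule.orthogonalProjection W).le_opNorm x
      _ ≤ 1 * ‖x‖ := mul_le_mul_of_nonneg_right (Submodule.orthogonalProjectionOnto_norm_le W) (norm_nonneg x)
      _ = ‖x‖ := one_mul _
  have hpos : 0 < alpha1 A := by
    have h2 : (0:ℝ) ≤ alpha2 A := inv_nonneg.mpr (norm_nonneg _)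
    have h3 : alpha2 A < alpha1 A := hsv; linarith
  constructor
  · have hAu : ‖matCLM A u‖ = alpha1 A := hmax
    have key : ‖projMap W (matCLM A u)‖ ≤ ‖(projMap W).comp (matCLM A)‖ := by
      calc ‖projMap W (matCLM A u)‖ = ‖((projMap W).comp (matCLM A)) u‖ := rfl
        _ ≤ ‖(projMap W).comp (matCLM A)‖ * ‖u‖ := ((projMap W).comp (matCLM A)).le_opNorm u
        _ = ‖(projMap W).comp (matCLM A)‖ := by rw [hu, mul_one]
    have : ‖projMap W ((‖matCLM A u‖)⁻¹ • matCLM A u)‖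
        = (alpha1 A)⁻¹ * ‖projMap W (matCLM A u)‖ := by
      rw [_root_.map_smul, norm_smul, hAu, Real.norm_eq_abs, abs_of_pos (inv_pos.mpr hpos)]
    rw [this]
    rw [← mul_assoc, mul_inv_cancel₀ (ne_of_gt hpos), one_mul]
    exact key
  · calc ‖(projMap W).comp (matCLM A)‖ ≤ ‖projMap W‖ * ‖matCLM A‖ :=
        ContinuousLinearMap.opNorm_comp_le _ _
      _ ≤ 1 * ‖matCLM A‖ := by
        apply mul_le_mul_of_nonneg_right hproj (norm_nonneg _)
      _ = alpha1 A := one_mul _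

end
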